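/- Let μ, b, λ: [0,∞) → ℝ be nonnegative functions with b nondecreasing, b(0) = 1, b(a+α) ≤ (B₀α+1)b(a) for a > 0, α ∈ (0,1), and μ(a)b(a) ≤ β₀λ(a) for all a ≥ 0 with β₀ > 1, B₀ > 0. Fix α ∈ (0,1) and define μ_i, b_i, λ_i as the averages of μ, b, λ over ((i−1)α, iα]. Then μ_i·b_i ≤ β₀(B₀+1)·λ_i for all i ≥ 1. -/

import Mathlib

open MeasureTheory

/-- The average of `f` over the interval `((i-1)α, iα]`. -/
noncomputable def avg (f : ℝ → ℝ) (α : ℝ) (i : ℕ) : ℝ :=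
  (1 / α) * ∫ a in (((i : ℝ) - 1) * α)..((i : ℝ) * α), f a

/-! On `((i-1)α, iα]` the growth bound gives `b(iα) ≤ (B₀+1) b(a)`, hence
`μ(a) b(iα) ≤ β₀(B₀+1) λ(a)`. Integrating this, and bounding `∫ b ≤ α b(iα)` by monotonicity,
bounds the product of the two integrals by `α β₀(B₀+1) ∫ λ`. -/

open Set intervalIntegral

lemma le_add_one_mul_of_growth {b : ℝ → ℝ} {B₀ a z : ℝ} (hB₀ : 0 ≤ B₀)
    (hgrowth : ∀ a : ℝ, 0 < a → ∀ β ∈ Ioo (0 : ℝ) 1, b (a + β) ≤ (B₀ * β + 1) * b a)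
    (ha : 0 < a) (hba : 0 ≤ b a) (haz : a ≤ z) (hz : z < a + 1) :
    b z ≤ (B₀ + 1) * b a := by
  rcases haz.eq_or_lt with rfl | haz
  · nlinarith
  · calc b z = b (a + (z - a)) := by rw [add_sub_cancel]
      _ ≤ (B₀ * (z - a) + 1) * b a := hgrowth a ha (z - a) ⟨by linarith, by linarith⟩
      _ ≤ (B₀ + 1) * b a := by gcongr; nlinarith

lemma integral_mul_integral_le_of_monotoneOn {f g h : ℝ → ℝ} {L R : ℝ} (hLR : L ≤ R)
    (hf : IntervalIntegrable f volume L R) (hh : IntervalIntegrable h volume L R)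
    (hg : MonotoneOn g (Icc L R)) (hf0 : ∀ a ∈ Ioo L R, 0 ≤ f a)
    (hfgh : ∀ a ∈ Ioo L R, f a * g R ≤ h a) :
    (∫ a in L..R, f a) * (∫ a in L..R, g a) ≤ (R - L) * ∫ a in L..R, h a := by
  have hg_le : ∫ a in L..R, g a ≤ (R - L) * g R := by
    simpa using integral_mono_on hLR (hg.mono (uIcc_of_le hLR).le).intervalIntegrable
      (intervalIntegrable_const (μ := volume)) fun a ha => hg ha (right_mem_Icc.2 hLR) ha.2
  have hf_nonneg : 0 ≤ ∫ a in L..R, f a := by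
    simpa using integral_mono_on_of_le_Ioo hLR intervalIntegrable_const hf hf0
  have hfg_le : (∫ a in L..R, f a) * g R ≤ ∫ a in L..R, h a := by
    simpa [intervalIntegral.integral_mul_const] using
      integral_mono_on_of_le_Ioo hLR (hf.mul_const (g R)) hh hfgh
  calc (∫ a in L..R, f a) * (∫ a in L..R, g a)
      ≤ (∫ a in L..R, f a) * ((R - L) * g R) := by gcongr
    _ = (R - L) * ((∫ a in L..R, f a) * g R) := by ring
    _ ≤ (R - L) * ∫ a in L..R, h a := by gcongr

theorem stmt_5_general (μ b lam : ℝ → ℝ) (β₀ B₀ α : ℝ)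
    (hB₀ : 0 < B₀) (hα : α ∈ Set.Ioo (0 : ℝ) 1)
    (hμnn : ∀ a : ℝ, 0 ≤ a → 0 ≤ μ a) (hbnn : ∀ a : ℝ, 0 ≤ a → 0 ≤ b a)
    (hmono : MonotoneOn b (Set.Ici (0 : ℝ)))
    (hgrowth : ∀ a : ℝ, 0 < a → ∀ β ∈ Set.Ioo (0 : ℝ) 1, b (a + β) ≤ (B₀ * β + 1) * b a)
    (hμb : ∀ a : ℝ, 0 ≤ a → μ a * b a ≤ β₀ * lam a)
    (hμint : ∀ i : ℕ, IntervalIntegrable μ volume (((i : ℝ) - 1) * α) ((i : ℝ) * α))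
    (hlamint : ∀ i : ℕ, IntervalIntegrable lam volume (((i : ℝ) - 1) * α) ((i : ℝ) * α)) :
    ∀ i : ℕ, 1 ≤ i → avg μ α i * avg b α i ≤ β₀ * (B₀ + 1) * avg lam α i := by
  obtain ⟨hα0, hα1⟩ := hα
  intro i hi
  unfold avg
  set L : ℝ := ((i : ℝ) - 1) * α
  set R : ℝ := (i : ℝ) * α
  have hL0 : 0 ≤ L := mul_nonneg (by simp [hi]) hα0.le
  have hRL : R - L = α := by ring
  have hpointwise : ∀ a ∈ Ioo L R, μ a * b R ≤ β₀ * (B₀ + 1) * lam a := by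
    intro a ⟨haL, haR⟩
    have ha0 : 0 < a := hL0.trans_lt haL
    have hbR : b R ≤ (B₀ + 1) * b a :=
      le_add_one_mul_of_growth hB₀.le hgrowth ha0 (hbnn a ha0.le) haR.le (by linarith)
    calc μ a * b R ≤ μ a * ((B₀ + 1) * b a) := mul_le_mul_of_nonneg_left hbR (hμnn a ha0.le)
      _ = (B₀ + 1) * (μ a * b a) := by ring
      _ ≤ (B₀ + 1) * (β₀ * lam a) := mul_le_mul_of_nonneg_left (hμb a ha0.le) (by linarith)
      _ = β₀ * (B₀ + 1) * lam a := by ring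
  have hintegrals := integral_mul_integral_le_of_monotoneOn (by linarith) (hμint i)
    ((hlamint i).const_mul (β₀ * (B₀ + 1))) (hmono.mono fun a ha => hL0.trans ha.1)
    (fun a ha => hμnn a (hL0.trans ha.1.le)) hpointwise
  rw [intervalIntegral.integral_const_mul, hRL] at hintegrals
  calc 1 / α * (∫ a in L..R, μ a) * (1 / α * ∫ a in L..R, b a)
      = 1 / α ^ 2 * ((∫ a in L..R, μ a) * ∫ a in L..R, b a) := by ring
    _ ≤ 1 / α ^ 2 * (α * (β₀ * (B₀ + 1) * ∫ a in L..R, lam a)) := by gcongr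
    _ = β₀ * (B₀ + 1) * (1 / α * ∫ a in L..R, lam a) := by field_simp

theorem stmt_5 (μ b lam : ℝ → ℝ) (β₀ B₀ α : ℝ)
    (hβ₀ : 1 < β₀) (hB₀ : 0 < B₀) (hα : α ∈ Set.Ioo (0 : ℝ) 1)
    (hμnn : ∀ a : ℝ, 0 ≤ a → 0 ≤ μ a) (hbnn : ∀ a : ℝ, 0 ≤ a → 0 ≤ b a)
    (hlamnn : ∀ a : ℝ, 0 ≤ a → 0 ≤ lam a)
    (hmono : MonotoneOn b (Set.Ici (0 : ℝ))) (hb0 : b 0 = 1)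
    (hgrowth : ∀ a : ℝ, 0 < a → ∀ β ∈ Set.Ioo (0 : ℝ) 1, b (a + β) ≤ (B₀ * β + 1) * b a)
    (hμb : ∀ a : ℝ, 0 ≤ a → μ a * b a ≤ β₀ * lam a)
    (hμint : ∀ i : ℕ, IntervalIntegrable μ volume (((i : ℝ) - 1) * α) ((i : ℝ) * α))
    (hlamint : ∀ i : ℕ, IntervalIntegrable lam volume (((i : ℝ) - 1) * α) ((i : ℝ) * α)) :
    ∀ i : ℕ, 1 ≤ i → avg μ α i * avg b α i ≤ β₀ * (B₀ + 1) * avg lam α i :=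
  stmt_5_general μ b lam β₀ B₀ α hB₀ hα hμnn hbnn hmono hgrowth hμb hμint hlamint
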